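/- With D, Π, E as above, for any r×r complex matrices S, T: p_r(S − T) ≥ p_N(E(S) − E(T)) ≥ (r/N) · p_r(S − T), where p_m(C) = min_{1 ≤ i ≤ m+1}( (i−1)/m + σ_i(C) ) denotes the a.c.s. modulus for m×m matrices (with σ_{m+1} = 0). -/

import Mathlib

open Matrix

/-- The `r×N` selection matrix `Π` with `Π_{k,j} = δ_{j, φ k}`. -/
def Pmat (N r : ℕ) (φ : Fin r → Fin N) : Matrix (Fin r) (Fin N) ℂ :=
  Matrix.of fun k j => if φ k = j then 1 else 0

/-- The extension operator `E(S) = Πᵀ S Π`. -/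
noncomputable def Eop (N r : ℕ) (φ : Fin r → Fin N) (S : Matrix (Fin r) (Fin r) ℂ) :
    Matrix (Fin N) (Fin N) ℂ :=
  (Pmat N r φ)ᵀ * S * Pmat N r φ

/-- The singular values of a square complex matrix, listed in decreasing order. -/
noncomputable def sv {m : ℕ} (A : Matrix (Fin m) (Fin m) ℂ) : Fin m → ℝ :=
  fun i =>
    Real.sqrt ((Matrix.isHermitian_conjTranspose_mul_self A).eigenvalues
      (Tuple.sort (Matrix.isHermitian_conjTranspose_mul_self A).eigenvalues i.rev))

/-- The a.c.s. modulus `p_m(C) = min_{1 ≤ i ≤ m+1} ((i−1)/m + σ_i(C))`, with the convention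
`σ_{m+1}(C) = 0`, for an `m×m` complex matrix `C`. -/
noncomputable def acsP {m : ℕ} (C : Matrix (Fin m) (Fin m) ℂ) : ℝ :=
  ⨅ i : Fin (m + 1),
    (((i : ℕ) : ℝ) / m + if h : (i : ℕ) < m then sv C ⟨(i : ℕ), h⟩ else 0)

open Polynomial

/-!
Since `E(C)ᴴ E(C) = E(Cᴴ C)` and `Π Πᵀ = 1`, the characteristic polynomial of `E(C)ᴴ E(C)` is
`X ^ (N - r)` times that of `Cᴴ C`; hence the decreasing list of singular values of `E(C)` is that
of `C` followed by `N - r` zeros. Both moduli are therefore minima of `i / m + σ_i` over the same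
zero-extended sequence `σ`, with `m = r` and `m = N`. Lowering `m` from `N` to `r` only increases
`i / m`, giving `p_N ≤ p_r`. Conversely, for `i < r` the `i`-th term of `p_N` dominates `r / N` times
the `i`-th term of `p_r`, and for `i ≥ r` it is at least
`i / N ≥ r / N ≥ (r / N) p_r`, as `p_r ≤ 1`.
-/

noncomputable def acsModulus (m : ℕ) (f : ℕ → ℝ) : ℝ :=
  ⨅ i : Fin (m + 1), ((i : ℕ) : ℝ) / m + f i

section AcsModulus

variable {m r N : ℕ} {f : ℕ → ℝ}

theorem acsModulus_le (f : ℕ → ℝ) {i : ℕ} (hi : i ≤ m) : acsModulus m f ≤ (i : ℝ) / m + f i :=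
  ciInf_le (Set.finite_range _).bddBelow (⟨i, Nat.lt_succ_of_le hi⟩ : Fin (m + 1))

theorem le_acsModulus {a : ℝ} (h : ∀ i ≤ m, a ≤ (i : ℝ) / m + f i) : a ≤ acsModulus m f :=
  le_ciInf fun i => h i (Nat.le_of_lt_succ i.2)

theorem acsModulus_le_one (hf : f m = 0) : acsModulus m f ≤ 1 :=
  (acsModulus_le f le_rfl).trans (by rw [hf, add_zero]; exact div_self_le_one _)

theorem acsModulus_le_of_le (f : ℕ → ℝ) (hrN : r ≤ N) : acsModulus N f ≤ acsModulus r f := by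
  refine le_acsModulus fun i hi => (acsModulus_le f (hi.trans hrN)).trans
    (add_le_add_left ?_ _)
  rcases i.eq_zero_or_pos with rfl | hi0
  · simp
  · exact div_le_div_of_nonneg_left (by positivity) (by exact_mod_cast hi0.trans_le hi)
      (by exact_mod_cast hrN)

theorem div_mul_acsModulus_le (hf : ∀ i, 0 ≤ f i) (hfr : f r = 0) (hrN : r ≤ N) :
    (r : ℝ) / N * acsModulus r f ≤ acsModulus N f := by
  refine le_acsModulus fun i _ => ?_
  have hrN' : (r : ℝ) / N ≤ 1 := div_le_one_of_le₀ (by exact_mod_cast hrN) (by positivity)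
  rcases lt_or_ge i r with hir | hri
  · have hr : (r : ℝ) ≠ 0 := Nat.cast_ne_zero.2 (by omega)
    calc (r : ℝ) / N * acsModulus r f ≤ r / N * (i / r + f i) := by
          gcongr
          exact acsModulus_le f hir.le
      _ = i / N + r / N * f i := by field_simp
      _ ≤ i / N + f i := by gcongr; exact mul_le_of_le_one_left (hf i) hrN'
  · calc (r : ℝ) / N * acsModulus r f ≤ r / N * 1 := by gcongr; exact acsModulus_le_one hfr
      _ ≤ i / N := by rw [mul_one]; gcongr
      _ ≤ i / N + f i := le_add_of_nonneg_right (hf i)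

end AcsModulus

theorem Multiset.sort_eq_of_pairwise {α : Type*} {r : α → α → Prop} [DecidableRel r]
    [IsTrans α r] [Std.Antisymm r] [Std.Total r] {s : Multiset α} {l : List α}
    (hl : l.Pairwise r) (hs : (l : Multiset α) = s) : s.sort r = l := by
  subst hs
  exact List.mergeSort_of_pairwise (by simpa using hl)

theorem Multiset.sort_ge_add_replicate {α : Type*} [LinearOrder α] {s : Multiset α} {a : α}
    (hs : ∀ x ∈ s, a ≤ x) (k : ℕ) :
    (s + Multiset.replicate k a).sort (· ≥ ·) = s.sort (· ≥ ·) ++ List.replicate k a := by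
  refine sort_eq_of_pairwise (List.pairwise_append.2 ⟨pairwise_sort _ _, ?_, ?_⟩)
    (by rw [← Multiset.coe_add, sort_eq, Multiset.coe_replicate])
  · exact List.pairwise_replicate.2 (.inr le_rfl)
  · intro x hx y hy
    rw [List.eq_of_mem_replicate hy]
    exact hs x ((mem_sort _).1 hx)

section SingularValues

variable {m : ℕ}

theorem sv_antitone (A : Matrix (Fin m) (Fin m) ℂ) : Antitone (sv A) :=
  fun _ _ hij => Real.sqrt_le_sqrt <|
    Tuple.monotone_sort (isHermitian_conjTranspose_mul_self A).eigenvalues (Fin.rev_le_rev.2 hij)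

theorem sv_nonneg (A : Matrix (Fin m) (Fin m) ℂ) (i : Fin m) : 0 ≤ sv A i :=
  Real.sqrt_nonneg _

theorem ofFn_sv (A : Matrix (Fin m) (Fin m) ℂ) :
    List.ofFn (sv A) = ((Aᴴ * A).charpoly.roots.map fun z => √z.re).sort (· ≥ ·) := by
  have hA := isHermitian_conjTranspose_mul_self A
  refine (Multiset.sort_eq_of_pairwise (sv_antitone A).sortedGE_ofFn.pairwise ?_).symm
  rw [← Fin.univ_val_map, hA.roots_charpoly_eq_eigenvalues, Multiset.map_map]
  have hsv : sv A =
      (fun i => √(hA.eigenvalues i)) ∘ (Fin.revPerm.trans (Tuple.sort hA.eigenvalues)) := rfl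
  rw [hsv, ← Multiset.map_map, Multiset.map_univ_val_equiv]
  simp [Function.comp_def]

noncomputable def svSeq (A : Matrix (Fin m) (Fin m) ℂ) (i : ℕ) : ℝ :=
  (List.ofFn (sv A)).getD i 0

theorem acsP_eq_acsModulus (C : Matrix (Fin m) (Fin m) ℂ) :
    acsP C = acsModulus m (svSeq C) := by
  simp only [acsP, acsModulus, svSeq]
  refine iInf_congr fun i => congrArg _ ?_
  split_ifs with h
  · rw [List.getD_eq_getElem _ _ (by simpa using h), List.getElem_ofFn]
  · exact (List.getD_eq_default (List.ofFn (sv C)) 0 (by simpa using h)).symm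

theorem svSeq_nonneg (A : Matrix (Fin m) (Fin m) ℂ) (i : ℕ) : 0 ≤ svSeq A i := by
  rw [svSeq, List.getD_eq_getElem?_getD, List.getElem?_ofFn]
  split <;> simp [sv_nonneg]

theorem svSeq_self (A : Matrix (Fin m) (Fin m) ℂ) : svSeq A m = 0 :=
  List.getD_eq_default _ _ (by simp)

end SingularValues

section Extension

variable {N r : ℕ} {φ : Fin r → Fin N}

theorem Pmat_mul_transpose (hφ : Function.Injective φ) : Pmat N r φ * (Pmat N r φ)ᵀ = 1 := by
  ext k l
  simp [Pmat, Matrix.mul_apply, Matrix.one_apply, hφ.eq_iff]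

theorem conjTranspose_Pmat : (Pmat N r φ)ᴴ = (Pmat N r φ)ᵀ := by
  ext j k
  simp [Pmat, apply_ite]

theorem Eop_sub (S T : Matrix (Fin r) (Fin r) ℂ) :
    Eop N r φ S - Eop N r φ T = Eop N r φ (S - T) := by
  simp only [Eop, Matrix.mul_sub, Matrix.sub_mul]

theorem conjTranspose_Eop_mul_self (hφ : Function.Injective φ) (C : Matrix (Fin r) (Fin r) ℂ) :
    (Eop N r φ C)ᴴ * Eop N r φ C = Eop N r φ (Cᴴ * C) := by
  set P := Pmat N r φ
  calc (Eop N r φ C)ᴴ * Eop N r φ C = Pᵀ * Cᴴ * (P * Pᵀ) * C * P := by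
        simp only [Eop, conjTranspose_mul, conjTranspose_transpose_eq_transpose_conjTranspose,
          conjTranspose_Pmat, transpose_transpose, P, Matrix.mul_assoc]
    _ = Eop N r φ (Cᴴ * C) := by
        rw [Pmat_mul_transpose hφ, Matrix.mul_one]
        simp only [Eop, P, Matrix.mul_assoc]

theorem charpoly_Eop (hφ : Function.Injective φ) (M : Matrix (Fin r) (Fin r) ℂ) :
    (Eop N r φ M).charpoly = X ^ (N - r) * M.charpoly := by
  have h := charpoly_mul_comm_of_le (Pmat N r φ)ᵀ (M * Pmat N r φ)
    (by simpa using Fin.le_of_injective φ hφ)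
  rw [Eop, Matrix.mul_assoc, h, Matrix.mul_assoc, Pmat_mul_transpose hφ, Matrix.mul_one]
  simp

theorem ofFn_sv_Eop (hφ : Function.Injective φ) (C : Matrix (Fin r) (Fin r) ℂ) :
    List.ofFn (sv (Eop N r φ C)) = List.ofFn (sv C) ++ List.replicate (N - r) 0 := by
  have hroots : ((Eop N r φ C)ᴴ * Eop N r φ C).charpoly.roots =
      (Cᴴ * C).charpoly.roots + Multiset.replicate (N - r) 0 := by
    rw [conjTranspose_Eop_mul_self hφ, charpoly_Eop hφ,
      roots_mul (mul_ne_zero (pow_ne_zero _ X_ne_zero) (Matrix.charpoly_monic _).ne_zero),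
      roots_X_pow, Multiset.nsmul_singleton, add_comm]
  rw [ofFn_sv, ofFn_sv, hroots, Multiset.map_add, Multiset.map_replicate, Complex.zero_re,
    Real.sqrt_zero]
  refine Multiset.sort_ge_add_replicate (fun x hx => ?_) _
  obtain ⟨z, -, rfl⟩ := Multiset.mem_map.1 hx
  exact Real.sqrt_nonneg _

theorem svSeq_Eop (hφ : Function.Injective φ) (C : Matrix (Fin r) (Fin r) ℂ) :
    svSeq (Eop N r φ C) = svSeq C := by
  ext i
  simp only [svSeq, ofFn_sv_Eop hφ]
  grind

end Extension

theorem acs_modulus_extension_general (N r : ℕ)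
    (φ : Fin r → Fin N) (hφ : StrictMono φ)
    (S T : Matrix (Fin r) (Fin r) ℂ) :
    acsP (S - T) ≥ acsP (Eop N r φ S - Eop N r φ T) ∧
    acsP (Eop N r φ S - Eop N r φ T) ≥ ((r : ℝ) / N) * acsP (S - T) := by
  have hrN : r ≤ N := Fin.le_of_injective φ hφ.injective
  rw [Eop_sub, acsP_eq_acsModulus, acsP_eq_acsModulus, svSeq_Eop hφ.injective]
  exact ⟨acsModulus_le_of_le _ hrN,
    div_mul_acsModulus_le (svSeq_nonneg _) (svSeq_self _) hrN⟩

/-- Two-sided comparison of the a.c.s. modulus under extension: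
`p_r(S − T) ≥ p_N(E(S) − E(T)) ≥ (r/N) · p_r(S − T)`. -/
theorem acs_modulus_extension (N r : ℕ) (hr : 0 < r)
    (φ : Fin r → Fin N) (hφ : StrictMono φ)
    (S T : Matrix (Fin r) (Fin r) ℂ) :
    acsP (S - T) ≥ acsP (Eop N r φ S - Eop N r φ T) ∧
    acsP (Eop N r φ S - Eop N r φ T) ≥ ((r : ℝ) / N) * acsP (S - T) :=
  acs_modulus_extension_general N r φ hφ S T
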